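/- arXiv:2211.01443 — 11 statements merged into one kernel-verified Lean document; each statement's English description precedes it below -/
import Mathlib

section
/- Let X be a type, t a natural number, and 𝒞 a finite concept class over X that is K_{t, 2^t}-free. Then there exists an online learner 𝔸 : List (X × Bool) → X → Bool such that for every finite sequence (x₁,y₁),…,(x_T,y_T) of labeled examples with pairwise distinct points x₁,…,x_T that is realizable by 𝒞, the learner 𝔸 makes strictly fewer than 2t mistakes on that sequence. -/
/-- The concept class `𝒞` contains `K_{s,t}`: there are a finite set `S ⊆ X` of size `s`
and a subset `𝒯 ⊆ 𝒞` of size `t` with `c x = true` for all `x ∈ S`, `c ∈ 𝒯`. -/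
def ContainsK {X : Type*} (𝒞 : Finset (X → Bool)) (s t : ℕ) : Prop :=
  ∃ S : Finset X, S.card = s ∧ ∃ 𝒯 ⊆ 𝒞, 𝒯.card = t ∧ ∀ x ∈ S, ∀ c ∈ 𝒯, c x = true

/-- Number of mistakes of the online learner `𝔸` on a sequence of labeled examples,
given the history `hist` of previously seen examples. -/
def mistakesAux {X : Type*} (𝔸 : List (X × Bool) → X → Bool)
    (hist : List (X × Bool)) : List (X × Bool) → ℕ
  | [] => 0
  | (x, y) :: rest =>
      (if 𝔸 hist x ≠ y then 1 else 0) + mistakesAux 𝔸 (hist ++ [(x, y)]) rest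

/-- Number of mistakes of the online learner `𝔸` on a sequence of labeled examples. -/
def mistakes {X : Type*} (𝔸 : List (X × Bool) → X → Bool) (L : List (X × Bool)) : ℕ :=
  mistakesAux 𝔸 [] L


/-!
Until `t` positively labeled points have been seen the learner answers `false`, so it errs at
most `t` times, once per positive label. From then on it runs the halving algorithm. Every
concept still consistent with the history is `true` on the `t` distinct positive points seen so
far, so by `K_{t,2^t}`-freeness fewer than `2^t` concepts remain, and halving errs at most
`log₂` of that, i.e. at most `t - 1` times.
-/

section

variable {X : Type*}

def versionSpace (𝒞 : Finset (X → Bool)) (hist : List (X × Bool)) : Finset (X → Bool) :=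
  𝒞.filter fun c => ∀ p ∈ hist, c p.1 = p.2

def majorityVote (V : Finset (X → Bool)) (x : X) : Bool :=
  decide (V.card < 2 * (V.filter fun c => c x = true).card)

def halvingLearner (𝒞 : Finset (X → Bool)) (hist : List (X × Bool)) (x : X) : Bool :=
  majorityVote (versionSpace 𝒞 hist) x

def bicliqueFreeLearner (t : ℕ) (𝒞 : Finset (X → Bool)) (hist : List (X × Bool)) (x : X) :
    Bool :=
  if hist.countP (·.2) < t then false else halvingLearner 𝒞 hist x

lemma versionSpace_append_singleton (𝒞 : Finset (X → Bool)) (hist : List (X × Bool))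
    (p : X × Bool) :
    versionSpace 𝒞 (hist ++ [p]) = (versionSpace 𝒞 hist).filter fun c => c p.1 = p.2 := by
  ext c
  simp only [versionSpace, Finset.mem_filter, List.forall_mem_append,
    List.forall_mem_singleton, and_assoc]

lemma versionSpace_append_subset (𝒞 : Finset (X → Bool)) (l₁ l₂ : List (X × Bool)) :
    versionSpace 𝒞 (l₁ ++ l₂) ⊆ versionSpace 𝒞 l₁ := fun c hc => by
  simp only [versionSpace, Finset.mem_filter, List.forall_mem_append] at hc ⊢
  exact ⟨hc.1, hc.2.1⟩

lemma mistakesAux_congr {𝔸 𝔹 : List (X × Bool) → X → Bool} {hist : List (X × Bool)}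
    (h : ∀ l, 𝔸 (hist ++ l) = 𝔹 (hist ++ l)) (L : List (X × Bool)) :
    mistakesAux 𝔸 hist L = mistakesAux 𝔹 hist L := by
  induction L generalizing hist with
  | nil => rfl
  | cons p rest ih =>
    obtain ⟨x, y⟩ := p
    have hhist : 𝔸 hist = 𝔹 hist := by simpa using h []
    have hrest := ih (hist := hist ++ [(x, y)]) fun l => by simpa using h ((x, y) :: l)
    simp only [mistakesAux, hhist, hrest]

lemma two_mul_card_filter_le_of_majorityVote_ne {V : Finset (X → Bool)} {x : X} {y : Bool}
    (h : majorityVote V x ≠ y) : 2 * (V.filter fun c => c x = y).card ≤ V.card := by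
  have hsplit := Finset.card_filter_add_card_filter_not (s := V) (p := fun c => c x = true)
  simp only [Bool.not_eq_true] at hsplit
  cases y <;> simp only [majorityVote, ne_eq, decide_eq_true_eq, decide_eq_false_iff_not,
    not_lt] at h <;> omega

lemma mistake_add_log_card_filter_le {V : Finset (X → Bool)} {x : X} {y : Bool}
    (hne : (V.filter fun c => c x = y).Nonempty) :
    (if majorityVote V x ≠ y then 1 else 0) + Nat.log 2 (V.filter fun c => c x = y).card ≤
      Nat.log 2 V.card := by
  split_ifs with h
  · calc 1 + Nat.log 2 (V.filter fun c => c x = y).card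
        = Nat.log 2 ((V.filter fun c => c x = y).card * 2) := by
          rw [Nat.log_mul_base one_lt_two hne.card_pos.ne', add_comm]
      _ ≤ Nat.log 2 V.card := Nat.log_mono_right <| by
          linarith [two_mul_card_filter_le_of_majorityVote_ne h]
  · simpa using Nat.log_mono_right (Finset.card_filter_le V _)

theorem mistakesAux_halvingLearner_le (𝒞 : Finset (X → Bool)) (hist L : List (X × Bool))
    (hreal : (versionSpace 𝒞 (hist ++ L)).Nonempty) :
    mistakesAux (halvingLearner 𝒞) hist L ≤ Nat.log 2 (versionSpace 𝒞 hist).card := by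
  induction L generalizing hist with
  | nil => exact Nat.zero_le _
  | cons p rest ih =>
    obtain ⟨x, y⟩ := p
    rw [← List.singleton_append, ← List.append_assoc] at hreal
    have hne := hreal.mono (versionSpace_append_subset 𝒞 _ rest)
    rw [versionSpace_append_singleton] at hne
    have rest_le := ih (hist ++ [(x, y)]) hreal
    rw [versionSpace_append_singleton] at rest_le
    simp only [mistakesAux]
    exact (Nat.add_le_add_left rest_le _).trans (mistake_add_log_card_filter_le hne)

lemma card_versionSpace_lt {s r : ℕ} {𝒞 : Finset (X → Bool)} (hfree : ¬ ContainsK 𝒞 s r)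
    {hist : List (X × Bool)} {S : Finset X} (hS : S.card = s)
    (hpos : ∀ x ∈ S, (x, true) ∈ hist) : (versionSpace 𝒞 hist).card < r := by
  by_contra! hcard
  obtain ⟨𝒯, h𝒯, h𝒯card⟩ := Finset.exists_subset_card_eq hcard
  refine hfree ⟨S, hS, 𝒯, h𝒯.trans (Finset.filter_subset _ _), h𝒯card, fun x hx c hc => ?_⟩
  exact (Finset.mem_filter.mp (h𝒯 hc)).2 _ (hpos x hx)

lemma exists_finset_card_eq_of_le_countP {hist : List (X × Bool)}
    (hnd : (hist.map Prod.fst).Nodup) {t : ℕ} (ht : t ≤ hist.countP (·.2)) :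
    ∃ S : Finset X, S.card = t ∧ ∀ x ∈ S, (x, true) ∈ hist := by
  classical
  set l := (hist.filter (·.2)).map Prod.fst
  have hl : l.toFinset.card = hist.countP (·.2) := by
    rw [List.toFinset_card_of_nodup ((List.filter_sublist.map _).nodup hnd),
      List.length_map, List.countP_eq_length_filter]
  obtain ⟨S, hSl, hS⟩ := Finset.exists_subset_card_eq (hl ▸ ht)
  refine ⟨S, hS, fun x hx => ?_⟩
  obtain ⟨⟨x, y⟩, hp, rfl⟩ := List.mem_map.mp (List.mem_toFinset.mp (hSl hx))
  obtain ⟨hp, rfl : y = true⟩ := List.mem_filter.mp hp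
  exact hp

section BicliqueFreeLearner

variable {t : ℕ} {𝒞 : Finset (X → Bool)}

lemma mistakesAux_bicliqueFreeLearner_eq {hist : List (X × Bool)} (ht : t ≤ hist.countP (·.2))
    (L : List (X × Bool)) :
    mistakesAux (bicliqueFreeLearner t 𝒞) hist L = mistakesAux (halvingLearner 𝒞) hist L :=
  mistakesAux_congr (fun l => funext fun _ => if_neg (by rw [List.countP_append]; omega)) L

theorem mistakesAux_bicliqueFreeLearner_le (hfree : ¬ ContainsK 𝒞 t (2 ^ t))
    (hist L : List (X × Bool)) (hnd : ((hist ++ L).map Prod.fst).Nodup)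
    (hreal : (versionSpace 𝒞 (hist ++ L)).Nonempty) (ht : hist.countP (·.2) < t) :
    mistakesAux (bicliqueFreeLearner t 𝒞) hist L ≤ (t - hist.countP (·.2)) + (t - 1) := by
  induction L generalizing hist with
  | nil => exact Nat.zero_le _
  | cons p rest ih =>
    obtain ⟨x, y⟩ := p
    rw [← List.singleton_append, ← List.append_assoc] at hnd hreal
    have hcount : (hist ++ [(x, y)]).countP (·.2) = hist.countP (·.2) + if y then 1 else 0 := by
      simp [List.countP_append]
    have hpred : bicliqueFreeLearner t 𝒞 hist x = false := if_pos ht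
    simp only [mistakesAux, hpred]
    rcases lt_or_ge ((hist ++ [(x, y)]).countP (·.2)) t with hnext | hnext
    · have := ih _ hnd hreal hnext
      cases y <;> simp only [Bool.false_eq_true, ↓reduceIte, ne_eq, not_true_eq_false,
        not_false_eq_true] at hcount ⊢ <;> omega
    · rw [mistakesAux_bicliqueFreeLearner_eq hnext]
      obtain ⟨S, hS, hSpos⟩ := exists_finset_card_eq_of_le_countP
        (by rw [List.map_append] at hnd; exact hnd.of_append_left) hnext
      have hcard := card_versionSpace_lt hfree hS hSpos
      have hlog := Nat.log_lt_of_lt_pow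
        (hreal.mono (versionSpace_append_subset 𝒞 _ rest)).card_pos.ne' hcard
      have := mistakesAux_halvingLearner_le 𝒞 _ rest hreal
      cases y <;> simp only [Bool.false_eq_true, ↓reduceIte, ne_eq, not_true_eq_false,
        not_false_eq_true] at hcount ⊢ <;> omega

end BicliqueFreeLearner

end

theorem littlestone_from_biclique_free {X : Type*} (t : ℕ) (𝒞 : Finset (X → Bool))
    (hfree : ¬ ContainsK 𝒞 t (2 ^ t)) :
    ∃ 𝔸 : List (X × Bool) → X → Bool,
      ∀ L : List (X × Bool),
        (L.map Prod.fst).Nodup →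
        (∃ c ∈ 𝒞, ∀ p ∈ L, c p.1 = p.2) →
        mistakes 𝔸 L < 2 * t := by
  refine ⟨bicliqueFreeLearner t 𝒞, fun L hnd ⟨c, hc, hcL⟩ => ?_⟩
  have hreal : (versionSpace 𝒞 L).Nonempty := ⟨c, Finset.mem_filter.mpr ⟨hc, hcL⟩⟩
  rcases Nat.eq_zero_or_pos t with rfl | ht
  · -- `K_{0,1}`-freeness says that `𝒞` is empty
    have := card_versionSpace_lt hfree (hist := L) Finset.card_empty (by simp)
    exact absurd hreal.card_pos (by omega)
  · have := mistakesAux_bicliqueFreeLearner_le hfree [] L hnd hreal ht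
    simp only [List.countP_nil, Nat.sub_zero] at this
    exact this.trans_lt (by omega)
end

section
/- Let X be a type, 𝒞 a finite concept class over X, and S ⊆ X a finite set of size s that is shattered by 𝒞. Then 𝒞 contains K_{⌊s/2⌋, 2^{⌊s/2⌋}}, i.e., there exist a finite set S₀ ⊆ X with |S₀| = ⌊s/2⌋ and a subset 𝒯 ⊆ 𝒞 with |𝒯| = 2^{⌊s/2⌋} such that c x = true for all x ∈ S₀ and all c ∈ 𝒯. -/
/-!
Split the shattered set into disjoint parts `A` and `B`. For each `T ⊆ B` shattering gives a
concept that is `true` exactly on `A ∪ T` within `S`; these `2 ^ |B|` concepts are pairwise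
distinct, since each one recovers its `T` as the points of `B` where it is `true`, and all of
them are `true` on `A`.
-/

def Shatters {X : Type*} (𝒞 : Finset (X → Bool)) (S : Finset X) : Prop :=
  ∀ g : X → Bool, ∃ c ∈ 𝒞, ∀ x ∈ S, c x = g x

namespace Shatters

variable {X : Type*} {𝒞 : Finset (X → Bool)} {S : Finset X}

theorem exists_eq_true_iff (h : Shatters 𝒞 S) (T : Set X) :
    ∃ c ∈ 𝒞, ∀ x ∈ S, c x = true ↔ x ∈ T := by
  classical
  obtain ⟨c, hc𝒞, hc⟩ := h fun x => decide (x ∈ T)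
  exact ⟨c, hc𝒞, fun x hx => by rw [hc x hx, decide_eq_true_iff]⟩

theorem containsK_of_disjoint (h : Shatters 𝒞 S) {A B : Finset X} (hA : A ⊆ S) (hB : B ⊆ S)
    (hAB : Disjoint A B) : ContainsK 𝒞 A.card (2 ^ B.card) := by
  classical
  choose c hc𝒞 hc using fun T : Finset X => h.exists_eq_true_iff (↑A ∪ ↑T)
  have filter_eq : ∀ T ∈ B.powerset, B.filter (fun x => c T x = true) = T := by
    intro T hT
    rw [Finset.mem_powerset] at hT
    ext x
    rw [Finset.mem_filter]
    constructor
    · rintro ⟨hxB, hcx⟩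
      have hxA : x ∉ A := Finset.disjoint_right.mp hAB hxB
      simpa [hxA] using (hc T x (hB hxB)).mp hcx
    · intro hxT
      exact ⟨hT hxT, (hc T x (hB (hT hxT))).mpr (Or.inr hxT)⟩
  have hinj : Set.InjOn c B.powerset := fun T hT T' hT' hTT' => by
    rw [← filter_eq T hT, ← filter_eq T' hT', hTT']
  refine ⟨A, rfl, B.powerset.image c, ?_, ?_, ?_⟩
  · simpa only [Finset.image_subset_iff] using fun T _ => hc𝒞 T
  · rw [Finset.card_image_of_injOn hinj, Finset.card_powerset]
  · simp only [Finset.mem_image]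
    rintro x hxA _ ⟨T, -, rfl⟩
    exact (hc T x (hA hxA)).mpr (Or.inl hxA)

theorem containsK (h : Shatters 𝒞 S) {a b : ℕ} (hab : a + b ≤ S.card) :
    ContainsK 𝒞 a (2 ^ b) := by
  classical
  obtain ⟨A, hAS, rfl⟩ := S.exists_subset_card_eq (n := a) (by omega)
  obtain ⟨B, hBS, rfl⟩ := (S \ A).exists_subset_card_eq (n := b)
    (by rw [Finset.card_sdiff_of_subset hAS]; omega)
  exact h.containsK_of_disjoint hAS (hBS.trans Finset.sdiff_subset)
    (Finset.disjoint_of_subset_right hBS Finset.disjoint_sdiff)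

end Shatters

theorem shattered_implies_biclique {X : Type*} (𝒞 : Finset (X → Bool))
    (S : Finset X) (s : ℕ) (hcard : S.card = s)
    (hshatter : ∀ g : X → Bool, ∃ c ∈ 𝒞, ∀ x ∈ S, c x = g x) :
    ContainsK 𝒞 (s / 2) (2 ^ (s / 2)) :=
  Shatters.containsK hshatter (by omega)
end

section
/- Let X be a type, t a natural number, and 𝒞 a finite concept class over X that is K_{t, 2^t}-free. Then 𝒞 shatters no finite set S ⊆ X with |S| = 2t; in particular the VC dimension of 𝒞 is strictly less than 2t. -/
theorem containsK_of_shatters {X : Type*} {𝒞 : Finset (X → Bool)} {S A B : Finset X}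
    (hS : Shatters 𝒞 S) (hAS : A ⊆ S) (hBS : B ⊆ S) (hAB : Disjoint A B) :
    ContainsK 𝒞 A.card (2 ^ B.card) := by
  classical
  choose c hc𝒞 hcS using fun T : Finset X => hS fun x => decide (x ∈ A ∨ x ∈ T)
  have hc_true : ∀ T, ∀ x ∈ A, c T x = true := fun T x hx => by simp [hcS T x (hAS hx), hx]
  have hc_recovers : ∀ T ⊆ B, B.filter (fun x => c T x = true) = T := fun T hT => by
    ext x
    by_cases hxB : x ∈ B
    · simp [hxB, hcS T x (hBS hxB), Finset.disjoint_right.1 hAB hxB]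
    · simpa [hxB] using fun hxT => hxB (hT hxT)
  have hinj : Set.InjOn c B.powerset := fun T hT T' hT' h => by
    rw [← hc_recovers T (Finset.mem_powerset.1 hT), ← hc_recovers T' (Finset.mem_powerset.1 hT'),
      h]
  refine ⟨A, rfl, B.powerset.image c, Finset.image_subset_iff.2 fun T _ => hc𝒞 T, ?_, ?_⟩
  · rw [Finset.card_image_of_injOn hinj, Finset.card_powerset]
  · intro x hx f hf
    obtain ⟨T, -, rfl⟩ := Finset.mem_image.1 hf
    exact hc_true T x hx

theorem vc_lt_of_biclique_free {X : Type*} (t : ℕ) (𝒞 : Finset (X → Bool))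
    (hfree : ¬ ContainsK 𝒞 t (2 ^ t)) :
    ∀ S : Finset X, S.card = 2 * t →
      ¬ (∀ g : X → Bool, ∃ c ∈ 𝒞, ∀ x ∈ S, c x = g x) := by
  classical
  intro S hS hshat
  obtain ⟨A, hAS, hA⟩ := Finset.exists_subset_card_eq (s := S) (n := t) (by omega)
  have hB : (S \ A).card = t := by rw [Finset.card_sdiff_of_subset hAS]; omega
  have h := containsK_of_shatters hshat hAS Finset.sdiff_subset Finset.disjoint_sdiff
  rw [hA, hB] at h
  exact hfree h
end

section
/- Let t ≥ 4 be a natural number and let S' ⊆ Fin t be a fixed subset with |S'| = ⌈t/2⌉. Sample a tuple F : Fin (2^t) → (Fin t → Bool) uniformly at random, i.e., each of the 2^t concepts F i is an independent uniformly random function Fin t → Bool. Then with probability at least 2/3, the family {F i : i ∈ Fin (2^t)} shatters S', i.e., for every g : Fin t → Bool there exists i with F i x = g x for all x ∈ S'. -/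
open Finset

def extFun {t : ℕ} (S' : Finset (Fin t)) (h : {x : Fin t // x ∈ S'} → Bool) :
    Fin t → Bool :=
  fun x => if hx : x ∈ S' then h ⟨x, hx⟩ else false

lemma extFun_mem {t : ℕ} (S' : Finset (Fin t)) (h : {x : Fin t // x ∈ S'} → Bool)
    (x : Fin t) (hx : x ∈ S') : extFun S' h x = h ⟨x, hx⟩ := dif_pos hx

lemma card_match {t : ℕ} (S' : Finset (Fin t)) (g : Fin t → Bool) :
    Fintype.card {c : Fin t → Bool // ∀ x ∈ S', c x = g x} = 2 ^ (t - S'.card) := by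
  classical
  have e : {c : Fin t → Bool // ∀ x ∈ S', c x = g x} ≃ ({x : Fin t // x ∉ S'} → Bool) :=
  { toFun := fun c x => c.1 x.1
    invFun := fun f => ⟨fun x => if hx : x ∈ S' then g x else f ⟨x, hx⟩,
      fun x hx => by simp [hx]⟩
    left_inv := fun c => by
      apply Subtype.ext
      funext x
      by_cases hx : x ∈ S'
      · simp [hx, c.2 x hx]
      · simp [hx]
    right_inv := fun f => by
      funext x
      simp [x.2] }
  rw [Fintype.card_congr e, Fintype.card_fun, Fintype.card_bool,
    Fintype.card_subtype_compl]
  simp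

lemma card_nonmatch {t : ℕ} (S' : Finset (Fin t)) (g : Fin t → Bool) :
    Fintype.card {c : Fin t → Bool // ¬ ∀ x ∈ S', c x = g x}
      = 2 ^ t - 2 ^ (t - S'.card) := by
  classical
  rw [Fintype.card_subtype_compl, card_match]
  congr 1
  simp [Fintype.card_fun]

lemma card_allmiss {t N : ℕ} (S' : Finset (Fin t)) (g : Fin t → Bool) :
    Fintype.card {F : Fin N → Fin t → Bool // ∀ i, ¬ ∀ x ∈ S', F i x = g x}
      = (2 ^ t - 2 ^ (t - S'.card)) ^ N := by
  classical
  rw [Fintype.card_congr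
    (Equiv.subtypePiEquivPi (p := fun (_ : Fin N) (c : Fin t → Bool) => ¬ ∀ x ∈ S', c x = g x)),
    Fintype.card_pi]
  simp only [Finset.prod_const, Finset.card_univ, Fintype.card_fin]
  rw [card_nonmatch]

lemma six_mul_le_exp (x : ℝ) (hx : 4 ≤ x) : 6 * x ≤ Real.exp x := by
  have h1 : Real.exp x = Real.exp 4 * Real.exp (x - 4) := by
    rw [← Real.exp_add]; ring_nf
  have h2 : (x - 4) + 1 ≤ Real.exp (x - 4) := Real.add_one_le_exp _
  have h3 : (2.7 : ℝ) ^ 4 ≤ Real.exp 4 := by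
    have he : (2.7 : ℝ) ≤ Real.exp 1 := le_of_lt (by
      have := Real.exp_one_gt_d9; linarith)
    calc (2.7 : ℝ) ^ 4 ≤ (Real.exp 1) ^ 4 := by
          apply pow_le_pow_left₀ (by norm_num) he
      _ = Real.exp 4 := by
          rw [← Real.exp_nat_mul]; norm_num
  nlinarith [Real.exp_pos (x - 4)]

lemma key_real (a M : ℝ) (N : ℕ) (ha : 2 ≤ a) (hM : 4 ≤ M) (haM : a ≤ 2 * M)
    (hN : (N : ℝ) = a * M) : 3 * a * (a * M - M) ^ N ≤ (a * M) ^ N := by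
  have h0 : (0:ℝ) < a := by linarith
  have hM0 : (0:ℝ) < M := by linarith
  have h1 : a - 1 ≤ a * Real.exp (-(1/a)) := by
    have h := Real.add_one_le_exp (-(1/a))
    have h' : 1 - 1/a ≤ Real.exp (-(1/a)) := by linarith
    calc a - 1 = a * (1 - 1/a) := by field_simp
      _ ≤ a * Real.exp (-(1/a)) := by
          exact mul_le_mul_of_nonneg_left h' h0.le
  have h2 : (a-1)^N ≤ a^N * Real.exp (-M) := by
    calc (a-1)^N ≤ (a * Real.exp (-(1/a)))^N := pow_le_pow_left₀ (by linarith) h1 N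
      _ = a^N * Real.exp (-(1/a) * N) := by
          rw [mul_pow, ← Real.exp_nat_mul]; ring_nf
      _ = a^N * Real.exp (-M) := by
          congr 1
          rw [hN]; field_simp
  have h3 : 6 * M ≤ Real.exp M := six_mul_le_exp M hM
  have h4 : Real.exp (-M) * Real.exp M = 1 := by
    rw [← Real.exp_add]; simp
  have hfac : a * M - M = (a - 1) * M := by ring
  rw [hfac, mul_pow, mul_pow]
  have hMN : (0:ℝ) ≤ M ^ N := by positivity
  have step : 3 * a * (a-1)^N ≤ a^N := by
    have c1 : 3 * a * (a-1)^N ≤ 3 * a * (a^N * Real.exp (-M)) := by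
      apply mul_le_mul_of_nonneg_left h2 (by linarith)
    have c2 : 3 * a * (a^N * Real.exp (-M)) ≤ 6 * M * (a^N * Real.exp (-M)) := by
      apply mul_le_mul_of_nonneg_right (by linarith)
      positivity
    have c3 : 6 * M * (a^N * Real.exp (-M)) ≤ Real.exp M * (a^N * Real.exp (-M)) := by
      apply mul_le_mul_of_nonneg_right h3
      positivity
    have c4 : Real.exp M * (a^N * Real.exp (-M)) = a^N := by
      rw [show Real.exp M * (a^N * Real.exp (-M)) = a^N * (Real.exp (-M) * Real.exp M) by ring,
        h4, mul_one]
    linarith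
  calc 3 * a * ((a-1)^N * M^N) = (3 * a * (a-1)^N) * M^N := by ring
    _ ≤ a^N * M^N := mul_le_mul_of_nonneg_right step hMN

theorem random_class_shatters {t : ℕ} (ht : 4 ≤ t)
    (S' : Finset (Fin t)) (hS' : S'.card = (t + 1) / 2) :
    (2 : ℝ) / 3 ≤
      (Nat.card {F : Fin (2 ^ t) → (Fin t → Bool) //
          ∀ g : Fin t → Bool, ∃ i : Fin (2 ^ t), ∀ x ∈ S', F i x = g x} : ℝ) /
        (Nat.card (Fin (2 ^ t) → (Fin t → Bool)) : ℝ) := by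
  classical
  set s := (t + 1) / 2 with hsdef
  have hst : s ≤ t := by omega
  have hts2 : 2 ≤ t - s := by omega
  have hs1 : 1 ≤ s := by omega
  have hstu : s ≤ (t - s) + 1 := by omega
  set Q : (Fin (2 ^ t) → Fin t → Bool) → Prop :=
    fun F => ∃ g : Fin t → Bool, ∀ i, ¬ ∀ x ∈ S', F i x = g x with hQdef
  have hPQ : ∀ F : Fin (2 ^ t) → Fin t → Bool,
      (∀ g : Fin t → Bool, ∃ i, ∀ x ∈ S', F i x = g x) ↔ ¬ Q F := by
    intro F
    constructor
    · rintro h ⟨g, hg⟩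
      obtain ⟨i, hi⟩ := h g
      exact hg i hi
    · intro h g
      by_contra hc
      exact h ⟨g, fun i hi => hc ⟨i, hi⟩⟩
  -- counts
  have hGoodCard : Nat.card {F : Fin (2 ^ t) → (Fin t → Bool) //
      ∀ g : Fin t → Bool, ∃ i : Fin (2 ^ t), ∀ x ∈ S', F i x = g x}
      = Fintype.card (Fin (2 ^ t) → Fin t → Bool) - Fintype.card {F // Q F} := by
    rw [Nat.card_eq_fintype_card, Fintype.card_congr (Equiv.subtypeEquivRight hPQ),
      Fintype.card_subtype_compl]
  have hBadLe : Fintype.card {F // Q F} ≤ 2 ^ s * (2 ^ t - 2 ^ (t - s)) ^ (2 ^ t) := by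
    rw [Fintype.card_subtype]
    have hsub : univ.filter Q ⊆ (univ : Finset ({x : Fin t // x ∈ S'} → Bool)).biUnion
        (fun h => univ.filter
          (fun F : Fin (2 ^ t) → Fin t → Bool => ∀ i, ¬ ∀ x ∈ S', F i x = extFun S' h x)) := by
      intro F hF
      simp only [mem_filter, mem_univ, true_and, hQdef] at hF
      obtain ⟨g, hg⟩ := hF
      refine mem_biUnion.2 ⟨fun x => g x.1, mem_univ _, ?_⟩
      simp only [mem_filter, mem_univ, true_and]
      intro i hfalse
      apply hg i
      intro x hx
      have hfx := hfalse x hx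
      rwa [extFun_mem S' _ x hx] at hfx
    calc (univ.filter Q).card
        ≤ ((univ : Finset ({x : Fin t // x ∈ S'} → Bool)).biUnion
            (fun h => univ.filter
              (fun F : Fin (2 ^ t) → Fin t → Bool =>
                ∀ i, ¬ ∀ x ∈ S', F i x = extFun S' h x))).card :=
          Finset.card_le_card hsub
      _ ≤ ∑ h : {x : Fin t // x ∈ S'} → Bool,
            (univ.filter (fun F : Fin (2 ^ t) → Fin t → Bool =>
              ∀ i, ¬ ∀ x ∈ S', F i x = extFun S' h x)).card :=
          Finset.card_biUnion_le
      _ = ∑ h : {x : Fin t // x ∈ S'} → Bool, (2 ^ t - 2 ^ (t - S'.card)) ^ (2 ^ t) := by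
          refine Finset.sum_congr rfl fun h _ => ?_
          rw [← Fintype.card_subtype, card_allmiss]
      _ = 2 ^ s * (2 ^ t - 2 ^ (t - s)) ^ (2 ^ t) := by
          rw [Finset.sum_const, Finset.card_univ, Fintype.card_fun, Fintype.card_bool,
            Fintype.card_coe, hS', smul_eq_mul]
  have hBadLeT : Fintype.card {F // Q F} ≤ Fintype.card (Fin (2 ^ t) → Fin t → Bool) :=
    Fintype.card_subtype_le _
  have hTotal : Nat.card (Fin (2 ^ t) → (Fin t → Bool)) = (2 ^ t) ^ (2 ^ t) := by
    simp [Nat.card_eq_fintype_card, Fintype.card_fun]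
  have hTotal' : Fintype.card (Fin (2 ^ t) → Fin t → Bool) = (2 ^ t) ^ (2 ^ t) := by
    simp [Fintype.card_fun]
  -- real inequality
  have hcast : ((2 ^ t - 2 ^ (t - s) : ℕ) : ℝ) = (2 : ℝ) ^ t - (2 : ℝ) ^ (t - s) := by
    have : (2 : ℕ) ^ (t - s) ≤ 2 ^ t := Nat.pow_le_pow_right (by norm_num) (Nat.sub_le t s)
    push_cast [Nat.cast_sub this]
    ring
  have hkey : 3 * ((2 ^ s * (2 ^ t - 2 ^ (t - s)) ^ (2 ^ t) : ℕ) : ℝ)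
      ≤ (((2 ^ t) ^ (2 ^ t) : ℕ) : ℝ) := by
    have ha : (2 : ℝ) ≤ 2 ^ s := by
      calc (2:ℝ) = 2 ^ 1 := (pow_one 2).symm
        _ ≤ 2 ^ s := pow_le_pow_right₀ (by norm_num) hs1
    have hM : (4 : ℝ) ≤ 2 ^ (t - s) := by
      calc (4:ℝ) = 2 ^ 2 := by norm_num
        _ ≤ 2 ^ (t - s) := pow_le_pow_right₀ (by norm_num) hts2
    have haM : (2:ℝ) ^ s ≤ 2 * 2 ^ (t - s) := by
      calc (2:ℝ) ^ s ≤ 2 ^ ((t - s) + 1) := pow_le_pow_right₀ (by norm_num) hstu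
        _ = 2 * 2 ^ (t - s) := by ring
    have hNr : ((2 ^ t : ℕ) : ℝ) = (2:ℝ) ^ s * 2 ^ (t - s) := by
      push_cast
      rw [← pow_add, Nat.add_sub_cancel' hst]
    have := key_real ((2:ℝ) ^ s) ((2:ℝ) ^ (t - s)) (2 ^ t) ha hM haM hNr
    have hee : (2:ℝ) ^ s * 2 ^ (t - s) = (2:ℝ) ^ t := by
      rw [← pow_add, Nat.add_sub_cancel' hst]
    rw [hee] at this
    push_cast [hcast]
    calc 3 * ((2:ℝ) ^ s * ((2:ℝ) ^ t - 2 ^ (t - s)) ^ 2 ^ t)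
        = 3 * (2:ℝ) ^ s * ((2:ℝ) ^ t - 2 ^ (t - s)) ^ 2 ^ t := by ring
      _ ≤ ((2:ℝ) ^ t) ^ 2 ^ t := this
  -- put together
  rw [hGoodCard, hTotal, hTotal']
  have hTpos : (0:ℝ) < (((2 ^ t) ^ (2 ^ t) : ℕ) : ℝ) := by positivity
  have hBT : Fintype.card {F // Q F} ≤ (2 ^ t) ^ (2 ^ t) := hTotal' ▸ hBadLeT
  rw [div_le_div_iff₀ (by norm_num) hTpos, Nat.cast_sub hBT]
  have hb : (Fintype.card {F // Q F} : ℝ)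
      ≤ ((2 ^ s * (2 ^ t - 2 ^ (t - s)) ^ (2 ^ t) : ℕ) : ℝ) := Nat.cast_le.2 hBadLe
  linarith
end

section
/- Let A and B be finite types, E : A → B → Prop a decidable relation (a bipartite graph), and d₁ ≥ 4 a natural number. Suppose the bipartite graph contains K_{d₁, 2^{d₁}}: there exist finite sets S₀ ⊆ A with |S₀| = d₁ and T₀ ⊆ B with |T₀| = 2^{d₁} such that E a b for all a ∈ S₀, b ∈ T₀. Sample r : A × B → Bool uniformly at random (independent fair bits for every pair), and for each b ∈ B define the concept c_b : A → Bool by c_b a = (decide (E a b)) && r (a, b). Then with probability at least 2/3, there exists a finite set S ⊆ A with |S| = ⌈d₁/2⌉ that is shattered by the family {c_b : b ∈ B}. -/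
/-!
Fix `S ⊆ S₀` with `|S| = ⌈d₁/2⌉`. On `S` every concept `c_b` with `b ∈ T₀` is the column `r(·, b)`,
and these columns are independent uniformly random patterns `S → Bool`. So a fixed pattern `φ : S → Bool` is
missed by all `2^d₁` columns with probability `(1 - 2^{-|S|})^{2^d₁} ≤ exp(-2^{d₁-|S|})`, and a union
bound over the `2^|S|` patterns shows that `S` fails to be shattered with probability at most
`2^|S| exp(-2^{d₁-|S|}) ≤ 1/3`.
-/

open Finset Real

noncomputable def uniformProb {Ω : Type*} (P : Ω → Prop) : ℝ :=
  Nat.card {ω // P ω} / Nat.card Ω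

section UniformProb

variable {Ω Ω' : Type*}

lemma uniformProb_comp_equiv (e : Ω' ≃ Ω) (P : Ω → Prop) :
    uniformProb (fun ω' => P (e ω')) = uniformProb P := by
  unfold uniformProb
  rw [Nat.card_congr e.subtypeEquivOfSubtype, Nat.card_congr e]

variable [Finite Ω]

lemma uniformProb_mono {P Q : Ω → Prop} (h : ∀ ω, P ω → Q ω) :
    uniformProb P ≤ uniformProb Q := by
  unfold uniformProb
  gcongr
  exact Nat.card_le_card_of_injective _ (Subtype.impEmbedding P Q h).injective

lemma uniformProb_not [Nonempty Ω] (P : Ω → Prop) :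
    uniformProb (fun ω => ¬ P ω) = 1 - uniformProb P := by
  classical
  have hsum : Nat.card {ω // P ω} + Nat.card {ω // ¬ P ω} = Nat.card Ω := by
    rw [← Nat.card_sum, Nat.card_congr (Equiv.sumCompl P)]
  have hpos : (0 : ℝ) < Nat.card Ω := by exact_mod_cast Nat.card_pos
  unfold uniformProb
  rw [eq_sub_iff_add_eq, ← add_div, div_eq_one_iff_eq hpos.ne', add_comm]
  exact_mod_cast hsum

lemma uniformProb_exists_le {ι : Type*} [Fintype ι] (P : ι → Ω → Prop) :
    uniformProb (fun ω => ∃ i, P i ω) ≤ ∑ i, uniformProb (P i) := by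
  have hcard : Nat.card {ω // ∃ i, P i ω} ≤ ∑ i, Nat.card {ω // P i ω} := by
    rw [← Nat.card_sigma]
    exact Nat.card_le_card_of_surjective (fun x => ⟨x.2.1, x.1, x.2.2⟩)
      fun ⟨ω, i, h⟩ => ⟨⟨i, ω, h⟩, rfl⟩
  unfold uniformProb
  rw [← sum_div]
  gcongr
  exact_mod_cast hcard

end UniformProb

lemma uniformProb_pi {ι α : Type*} [Fintype ι] (p : ι → α → Prop) :
    uniformProb (fun f : ι → α => ∀ i, p i (f i)) = ∏ i, uniformProb (p i) := by
  unfold uniformProb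
  rw [Nat.card_congr Equiv.subtypePiEquivPi, Nat.card_pi, Nat.card_pi]
  push_cast
  exact (prod_div_distrib ..).symm

lemma uniformProb_forall_column {A B α : Type*} [Fintype B] (Q : B → (A → α) → Prop) :
    uniformProb (fun r : A × B → α => ∀ b, Q b fun a => r (a, b)) = ∏ b, uniformProb (Q b) := by
  rw [← uniformProb_pi Q]
  exact uniformProb_comp_equiv
    (((Equiv.prodComm A B).arrowCongr (Equiv.refl α)).trans (Equiv.curry B A α))
    fun f => ∀ b, Q b (f b)

section Patterns

variable {A B : Type*} [Fintype A]

lemma uniformProb_eqOn_pattern (S : Finset A) (φ : S → Bool) :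
    uniformProb (fun g : A → Bool => ∀ x : S, g x = φ x) = 2⁻¹ ^ #S := by
  classical
  have hpoint (a : A) : uniformProb (fun v : Bool => ∀ h : a ∈ S, v = φ ⟨a, h⟩)
      = if a ∈ S then 2⁻¹ else 1 := by
    split_ifs with ha <;> simp [uniformProb, ha]
  simp only [Subtype.forall]
  rw [uniformProb_pi (fun a v => ∀ h : a ∈ S, v = φ ⟨a, h⟩)]
  simp only [hpoint, Fintype.prod_ite_mem, prod_const]

variable [Fintype B]

lemma uniformProb_columns_miss_pattern (S : Finset A) (T : Finset B) (φ : S → Bool) :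
    uniformProb (fun r : A × B → Bool => ∀ b ∈ T, ¬ ∀ x : S, r (x, b) = φ x)
      = (1 - 2⁻¹ ^ #S) ^ #T := by
  classical
  have hcolumn (b : B) :
      uniformProb (fun g : A → Bool => b ∈ T → ¬ ∀ x : S, g x = φ x)
        = if b ∈ T then 1 - 2⁻¹ ^ #S else 1 := by
    split_ifs with hb
    · simp only [hb, true_imp_iff]
      rw [uniformProb_not, uniformProb_eqOn_pattern]
    · simp [uniformProb, hb]
  refine (uniformProb_forall_column fun b (g : A → Bool) => b ∈ T → ¬ ∀ x : S, g x = φ x).trans ?_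
  simp only [hcolumn, Fintype.prod_ite_mem, prod_const]

lemma uniformProb_exists_missed_pattern_le (S : Finset A) (T : Finset B) :
    uniformProb (fun r : A × B → Bool => ∃ φ : S → Bool, ∀ b ∈ T, ¬ ∀ x : S, r (x, b) = φ x)
      ≤ 2 ^ #S * (1 - 2⁻¹ ^ #S) ^ #T := by
  classical
  refine (uniformProb_exists_le _).trans_eq ?_
  simp only [uniformProb_columns_miss_pattern, sum_const, card_univ, Fintype.card_fun,
    Fintype.card_bool, Fintype.card_coe, nsmul_eq_mul]
  norm_num

end Patterns

lemma six_mul_le_exp_s4 {y : ℝ} (hy : 4 ≤ y) : 6 * y ≤ exp y := by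
  have hhalf := quadratic_le_exp_of_nonneg (x := y / 2) (by linarith)
  have hsq : exp y = exp (y / 2) ^ 2 := by rw [sq, ← exp_add, add_halves]
  have hlin : 1 + y ≤ 1 + y / 2 + (y / 2) ^ 2 / 2 := by nlinarith
  have hsq_le := pow_le_pow_left₀ (by positivity) (hlin.trans hhalf) 2
  nlinarith

lemma two_pow_mul_one_sub_inv_two_pow_pow_le {s d : ℕ} (hsd : s + 2 ≤ d) (hds : 2 * s ≤ d + 1) :
    2 ^ s * (1 - 2⁻¹ ^ s : ℝ) ^ 2 ^ d ≤ 1 / 3 := by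
  obtain ⟨m, rfl⟩ := Nat.exists_eq_add_of_le (le_trans (by omega) hsd : s ≤ d)
  have hy : (4 : ℝ) ≤ 2 ^ m := by
    calc (4 : ℝ) = 2 ^ 2 := by norm_num
      _ ≤ 2 ^ m := pow_le_pow_right₀ one_le_two (by omega)
  have hle_one : (2⁻¹ : ℝ) ^ s ≤ 1 := pow_le_one₀ (by norm_num) (by norm_num)
  have hdecay : (1 - 2⁻¹ ^ s : ℝ) ^ 2 ^ (s + m) ≤ (exp (2 ^ m))⁻¹ := by
    calc (1 - 2⁻¹ ^ s : ℝ) ^ 2 ^ (s + m) ≤ exp (-2⁻¹ ^ s) ^ 2 ^ (s + m) := by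
          gcongr
          linarith [add_one_le_exp (-2⁻¹ ^ s : ℝ)]
      _ = (exp (2 ^ m))⁻¹ := by
          rw [← exp_nat_mul, ← exp_neg]
          congr 1
          push_cast
          rw [pow_add, inv_pow]
          field_simp
  have hs : (2 : ℝ) ^ s ≤ 2 * 2 ^ m := by
    rw [← pow_succ']
    exact pow_le_pow_right₀ one_le_two (by omega)
  calc 2 ^ s * (1 - 2⁻¹ ^ s : ℝ) ^ 2 ^ (s + m) ≤ 2 * 2 ^ m * (exp (2 ^ m))⁻¹ := by
        gcongr
    _ ≤ 1 / 3 := by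
        rw [mul_inv_le_iff₀ (exp_pos _)]
        linarith [six_mul_le_exp_s4 hy]

theorem completeness_random_flip {A B : Type*} [Fintype A] [Fintype B]
    (E : A → B → Prop) [∀ a b, Decidable (E a b)] (d₁ : ℕ) (hd₁ : 4 ≤ d₁)
    (S₀ : Finset A) (T₀ : Finset B) (hS₀ : S₀.card = d₁) (hT₀ : T₀.card = 2 ^ d₁)
    (hE : ∀ a ∈ S₀, ∀ b ∈ T₀, E a b) :
    (2 : ℝ) / 3 ≤
      (Nat.card {r : A × B → Bool //
          ∃ S : Finset A, S.card = (d₁ + 1) / 2 ∧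
            ∀ g : A → Bool, ∃ b : B, ∀ x ∈ S, (decide (E x b) && r (x, b)) = g x} : ℝ) /
        (Nat.card (A × B → Bool) : ℝ) := by
  obtain ⟨S, hSS₀, hS⟩ := exists_subset_card_eq (show (d₁ + 1) / 2 ≤ S₀.card by omega)
  have hshatters (r : A × B → Bool)
      (hr : ¬ ∃ φ : S → Bool, ∀ b ∈ T₀, ¬ ∀ x : S, r (x, b) = φ x) :
      ∃ S : Finset A, S.card = (d₁ + 1) / 2 ∧
        ∀ g : A → Bool, ∃ b : B, ∀ x ∈ S, (decide (E x b) && r (x, b)) = g x := by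
    refine ⟨S, hS, fun g => ?_⟩
    push Not at hr
    obtain ⟨b, hb, hbg⟩ := hr fun x => g x
    exact ⟨b, fun x hx => by simp [hE x (hSS₀ hx) b hb, hbg ⟨x, hx⟩]⟩
  have hmissed := uniformProb_exists_missed_pattern_le S T₀
  have hsmall := two_pow_mul_one_sub_inv_two_pow_pow_le (s := (d₁ + 1) / 2) (d := d₁)
    (by omega) (by omega)
  rw [hS, hT₀] at hmissed
  -- the right-hand side is `uniformProb` of the shattering event, by unfolding
  refine le_trans ?_ (uniformProb_mono hshatters)
  rw [uniformProb_not]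
  linarith
end

section
/- Let A, B be types, E : A → B → Prop a relation (a bipartite graph G), and ℓ, t₁, q₁ natural numbers with t₁ ≤ q₁ and 2^{t₁} ≤ q₁^{ℓ}. Suppose G contains K_{q₁, q₁}. Define the one-sided product graph G' with parts A and (Fin ℓ → B), where a ∈ A is adjacent to T : Fin ℓ → B iff E a (T i) holds for every i : Fin ℓ. Then G' contains K_{t₁, 2^{t₁}}: there exist a finite set S ⊆ A with |S| = t₁ and a finite set 𝒯 of functions Fin ℓ → B with |𝒯| = 2^{t₁} such that every a ∈ S is adjacent in G' to every T ∈ 𝒯. -/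
theorem one_sided_product_completeness {A B : Type*} (E : A → B → Prop)
    (ℓ t₁ q₁ : ℕ) (h₁ : t₁ ≤ q₁) (h₂ : 2 ^ t₁ ≤ q₁ ^ ℓ)
    (hK : ∃ (P : Finset A) (Q : Finset B), P.card = q₁ ∧ Q.card = q₁ ∧
        ∀ a ∈ P, ∀ b ∈ Q, E a b) :
    ∃ (S : Finset A) (𝒯 : Finset (Fin ℓ → B)), S.card = t₁ ∧ 𝒯.card = 2 ^ t₁ ∧
      ∀ a ∈ S, ∀ T ∈ 𝒯, ∀ i : Fin ℓ, E a (T i) := by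
  obtain ⟨P, Q, hP, hQ, hE⟩ := hK
  obtain ⟨S, hSP, hS⟩ := Finset.exists_subset_card_eq (hP ▸ h₁)
  have hpi : (Fintype.piFinset (fun _ : Fin ℓ => Q)).card = q₁ ^ ℓ := by
    simp [Fintype.card_piFinset, hQ]
  obtain ⟨𝒯, h𝒯sub, h𝒯⟩ := Finset.exists_subset_card_eq (hpi ▸ h₂)
  refine ⟨S, 𝒯, hS, h𝒯, fun a ha T hT i => ?_⟩
  have := h𝒯sub hT
  rw [Fintype.mem_piFinset] at this
  exact hE a (hSP ha) (T i) (this i)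
end

section
/- Let A, B be types, E : A → B → Prop a relation (a bipartite graph G), and ℓ, t₂, q₂ natural numbers with 1 ≤ q₂ ≤ t₂ and q₂^{ℓ} ≤ 2^{t₂}. Suppose G is K_{q₂, q₂}-free. Define the one-sided product graph G' with parts A and (Fin ℓ → B), where a ∈ A is adjacent to T : Fin ℓ → B iff E a (T i) holds for every i : Fin ℓ. Then G' is K_{t₂, 2^{t₂}}-free: there do not exist a finite set S ⊆ A with |S| = t₂ and a finite set 𝒯 of functions Fin ℓ → B with |𝒯| = 2^{t₂} such that every a ∈ S is adjacent in G' to every T ∈ 𝒯. -/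
theorem one_sided_product_soundness {A B : Type*} (E : A → B → Prop)
    (ℓ t₂ q₂ : ℕ) (h₁ : 1 ≤ q₂) (h₂ : q₂ ≤ t₂) (h₃ : q₂ ^ ℓ ≤ 2 ^ t₂)
    (hfree : ¬ ∃ (P : Finset A) (Q : Finset B), P.card = q₂ ∧ Q.card = q₂ ∧
        ∀ a ∈ P, ∀ b ∈ Q, E a b) :
    ¬ ∃ (S : Finset A) (𝒯 : Finset (Fin ℓ → B)), S.card = t₂ ∧ 𝒯.card = 2 ^ t₂ ∧
        ∀ a ∈ S, ∀ T ∈ 𝒯, ∀ i : Fin ℓ, E a (T i) := by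
  classical
  rintro ⟨S, 𝒯, hS, h𝒯, hadj⟩
  set Q' : Finset B := 𝒯.biUnion (fun T => Finset.image T Finset.univ) with hQ'
  have hmemQ' : ∀ T ∈ 𝒯, ∀ i : Fin ℓ, T i ∈ Q' := by
    intro T hT i
    exact Finset.mem_biUnion.2 ⟨T, hT, Finset.mem_image.2 ⟨i, Finset.mem_univ _, rfl⟩⟩
  by_cases hbig : q₂ ≤ Q'.card
  · obtain ⟨Q, hQsub, hQcard⟩ := Finset.exists_subset_card_eq hbig
    obtain ⟨P, hPsub, hPcard⟩ := Finset.exists_subset_card_eq (hS ▸ h₂)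
    refine hfree ⟨P, Q, hPcard, hQcard, ?_⟩
    intro a ha b hb
    obtain ⟨T, hT, hbT⟩ := Finset.mem_biUnion.1 (hQsub hb)
    obtain ⟨i, _, rfl⟩ := Finset.mem_image.1 hbT
    exact hadj a (hPsub ha) T hT i
  · push_neg at hbig
    have hsub : 𝒯 ⊆ Fintype.piFinset (fun _ : Fin ℓ => Q') := by
      intro T hT
      exact Fintype.mem_piFinset.2 (fun i => hmemQ' T hT i)
    have hcard : 𝒯.card ≤ Q'.card ^ ℓ := by
      calc 𝒯.card ≤ (Fintype.piFinset (fun _ : Fin ℓ => Q')).card :=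
            Finset.card_le_card hsub
        _ = Q'.card ^ ℓ := by
            rw [Fintype.card_piFinset]
            simp
    rcases Nat.eq_zero_or_pos ℓ with hℓ | hℓ
    · subst hℓ
      simp only [pow_zero] at hcard
      rw [h𝒯] at hcard
      have : 2 ≤ 2 ^ t₂ := Nat.one_lt_two_pow (by omega)
      omega
    · have h1 : Q'.card ^ ℓ < q₂ ^ ℓ := Nat.pow_lt_pow_left hbig (by omega)
      rw [h𝒯] at hcard
      omega
end

section
/- Let A, B be types, E : A → B → Prop a relation (a bipartite graph G), and n, ℓ, t₂, q₂ natural numbers. Let S : Fin n → (Fin ℓ → A) and T : Fin n → (Fin ℓ → B) be tuples satisfying the following dispersion property: for every M : Finset (Fin n) with |M| = t₂, the set {S i k : i ∈ M, k : Fin ℓ} has at least q₂ elements and the set {T j k : j ∈ M, k : Fin ℓ} has at least q₂ elements. Suppose G is K_{q₂, q₂}-free. Then there do not exist I, J : Finset (Fin n) with |I| = |J| = t₂ such that E (S i k) (T j k') holds for all i ∈ I, j ∈ J and all k, k' : Fin ℓ. -/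
theorem two_sided_product_soundness {A B : Type*} (E : A → B → Prop)
    (n ℓ t₂ q₂ : ℕ)
    (S : Fin n → (Fin ℓ → A)) (T : Fin n → (Fin ℓ → B))
    (hdispS : ∀ M : Finset (Fin n), M.card = t₂ →
        q₂ ≤ {a : A | ∃ i ∈ M, ∃ k : Fin ℓ, S i k = a}.ncard)
    (hdispT : ∀ M : Finset (Fin n), M.card = t₂ →
        q₂ ≤ {b : B | ∃ j ∈ M, ∃ k : Fin ℓ, T j k = b}.ncard)
    (hfree : ¬ ∃ (P : Finset A) (Q : Finset B), P.card = q₂ ∧ Q.card = q₂ ∧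
        ∀ a ∈ P, ∀ b ∈ Q, E a b) :
    ¬ ∃ (I J : Finset (Fin n)), I.card = t₂ ∧ J.card = t₂ ∧
        ∀ i ∈ I, ∀ j ∈ J, ∀ k k' : Fin ℓ, E (S i k) (T j k') := by
  rintro ⟨I, J, hI, hJ, hE⟩
  classical
  set PA : Finset A := (I ×ˢ (Finset.univ : Finset (Fin ℓ))).image fun p => S p.1 p.2 with hPA
  set QB : Finset B := (J ×ˢ (Finset.univ : Finset (Fin ℓ))).image fun p => T p.1 p.2 with hQB
  have hSA : {a : A | ∃ i ∈ I, ∃ k : Fin ℓ, S i k = a} = ↑PA := by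
    ext a; simp [hPA, Finset.mem_image]
  have hSB : {b : B | ∃ j ∈ J, ∃ k : Fin ℓ, T j k = b} = ↑QB := by
    ext b; simp [hQB, Finset.mem_image]
  have hcardA : q₂ ≤ PA.card := by
    have := hdispS I hI; rwa [hSA, Set.ncard_coe_finset] at this
  have hcardB : q₂ ≤ QB.card := by
    have := hdispT J hJ; rwa [hSB, Set.ncard_coe_finset] at this
  obtain ⟨P, hPsub, hPcard⟩ := Finset.exists_subset_card_eq hcardA
  obtain ⟨Q, hQsub, hQcard⟩ := Finset.exists_subset_card_eq hcardB
  apply hfree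
  refine ⟨P, Q, hPcard, hQcard, ?_⟩
  intro a ha b hb
  have ha' := hPsub ha
  have hb' := hQsub hb
  simp only [hPA, Finset.mem_image, Finset.mem_product] at ha'
  simp only [hQB, Finset.mem_image, Finset.mem_product] at hb'
  obtain ⟨⟨i, k⟩, ⟨hi, -⟩, rfl⟩ := ha'
  obtain ⟨⟨j, k'⟩, ⟨hj, -⟩, rfl⟩ := hb'
  exact hE i hi j hj k k'
end

section
/- Let A, B be finite types with |A| = |B| = N ≥ 1, let E : A → B → Prop be a decidable relation, and let P ⊆ A, Q ⊆ B be finite sets with |P| = |Q| = q₁ ≥ 1 such that E a b holds for all a ∈ P, b ∈ Q. Let n, ℓ, t₁ be natural numbers with n · (q₁ / N)^{ℓ} ≥ 10 · 2^{t₁} (as real numbers). Sample S : Fin n → (Fin ℓ → A) and T : Fin n → (Fin ℓ → B) uniformly at random (all n·ℓ coordinates on each side independent and uniform). Then with probability at least 9/10, there exist I, J : Finset (Fin n) with |I| = |J| = 2^{t₁} such that E (S i k) (T j k') holds for all i ∈ I, j ∈ J and all k, k' : Fin ℓ. -/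
/-! The ℓ-tuples with all coordinates in `P` form a fraction `p = (q₁ / N) ^ ℓ` of `A ^ ℓ`, and
every such row `S i` is adjacent in the product to every column `T j` whose coordinates all lie
in `Q`. So it suffices that each side has at least `m = 2 ^ t₁` such "hits" with probability
`≥ 19 / 20`, as `(19 / 20) ^ 2 ≥ 9 / 10`. The number of hits is binomial with mean `n p ≥ 10 m`,
and the exponential-moment (Chernoff) bound with weight `1 / 10` per hit gives
`P(fewer than m hits) ≤ 10 ^ m (1 - 9 p / 10) ^ n ≤ (10 e⁻⁹) ^ m ≤ 1 / 20`. -/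

open Finset Fintype

def hitCount {ι β : Type*} [Fintype ι] [DecidableEq β] (G : Finset β) (S : ι → β) : ℕ :=
  #{i | S i ∈ G}

theorem ten_mul_exp_neg_nine_le : 10 * Real.exp (-9) ≤ 1 / 20 := by
  have h : (200 : ℝ) ≤ Real.exp 9 :=
    calc (200 : ℝ) ≤ 2.7182818283 ^ 9 := by norm_num
      _ ≤ Real.exp 1 ^ 9 := pow_le_pow_left₀ (by norm_num) Real.exp_one_gt_d9.le 9
      _ = Real.exp 9 := by rw [← Real.exp_nat_mul]; norm_num
  rw [Real.exp_neg, ← div_eq_mul_inv, div_le_div_iff₀ (Real.exp_pos 9) (by norm_num)]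
  linarith

section HitCount

variable {β : Type*} [Fintype β] (G : Finset β)

theorem card_pos_of_le_mul_card_div {n m : ℕ} (hm : 0 < m)
    (hdens : 10 * m ≤ n * (#G / card β : ℝ)) : 0 < card β := by
  refine (card_pos.2 ?_).trans_le (card_le_univ G)
  rw [nonempty_iff_ne_empty]
  rintro rfl
  simp only [Finset.card_empty, Nat.cast_zero, zero_div, mul_zero] at hdens
  have hm' : (0 : ℝ) < m := by exact_mod_cast hm
  linarith

variable [DecidableEq β]

theorem sum_pow_hitCount {R : Type*} [CommSemiring R] (c : R) (n : ℕ) :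
    ∑ S : Fin n → β, c ^ hitCount G S = (c * #G + #Gᶜ) ^ n := by
  have hsum : ∑ x, (if x ∈ G then c else 1) = c * #G + #Gᶜ := by
    rw [sum_ite, filter_mem_eq_inter, univ_inter, sum_const, sum_const, nsmul_eq_mul,
      nsmul_eq_mul, mul_one, mul_comm, filter_not, filter_mem_eq_inter, univ_inter,
      ← compl_eq_univ_sdiff]
  rw [← hsum, Fintype.sum_pow]
  refine sum_congr rfl fun S _ => ?_
  rw [prod_ite, prod_const, prod_const_one, mul_one, hitCount]

theorem pow_mul_card_hitCount_lt_le {c : ℝ} (hc₀ : 0 ≤ c) (hc₁ : c ≤ 1) (n m : ℕ) :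
    c ^ m * #{S : Fin n → β | hitCount G S < m} ≤ (c * #G + #Gᶜ) ^ n := by
  calc c ^ m * #{S : Fin n → β | hitCount G S < m}
      = ∑ S ∈ {S : Fin n → β | hitCount G S < m}, c ^ m := by
        rw [sum_const, nsmul_eq_mul, mul_comm]
    _ ≤ ∑ S ∈ {S : Fin n → β | hitCount G S < m}, c ^ hitCount G S :=
        sum_le_sum fun S hS => pow_le_pow_of_le_one hc₀ hc₁ (mem_filter.1 hS).2.le
    _ ≤ ∑ S, c ^ hitCount G S :=
        sum_le_sum_of_subset_of_nonneg (subset_univ _) fun _ _ _ => by positivity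
    _ = (c * #G + #Gᶜ) ^ n := sum_pow_hitCount G c n

theorem card_hitCount_lt_le {n m : ℕ} (hm : 0 < m) (hdens : 10 * m ≤ n * (#G / card β : ℝ)) :
    (#{S : Fin n → β | hitCount G S < m} : ℝ) ≤ card β ^ n / 20 := by
  set p : ℝ := #G / card β
  have hM : (0 : ℝ) < card β := by exact_mod_cast card_pos_of_le_mul_card_div G hm hdens
  have hp : p ≤ 1 := div_le_one_of_le₀ (by exact_mod_cast card_le_univ G) hM.le
  have hbase : 1 / 10 * (#G : ℝ) + #Gᶜ = card β * (1 - 9 / 10 * p) := by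
    rw [card_compl, Nat.cast_sub (card_le_univ G)]
    simp only [p]
    field_simp
    ring
  have hdecay : (1 - 9 / 10 * p) ^ n ≤ Real.exp (-9 * m) :=
    calc (1 - 9 / 10 * p) ^ n ≤ Real.exp (-(9 / 10 * p)) ^ n :=
          pow_le_pow_left₀ (by linarith) (Real.one_sub_le_exp_neg _) n
      _ = Real.exp (-(9 / 10 * (n * p))) := by rw [← Real.exp_nat_mul]; ring_nf
      _ ≤ Real.exp (-9 * m) := Real.exp_le_exp.2 (by linarith)
  have hconst : (10 : ℝ) ^ m * Real.exp (-9 * m) ≤ 1 / 20 :=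
    calc (10 : ℝ) ^ m * Real.exp (-9 * m) = (10 * Real.exp (-9)) ^ m := by
          rw [mul_pow, ← Real.exp_nat_mul]; ring_nf
      _ ≤ 10 * Real.exp (-9) := pow_le_of_le_one (by positivity) 
          (ten_mul_exp_neg_nine_le.trans (by norm_num)) hm.ne'
      _ ≤ 1 / 20 := ten_mul_exp_neg_nine_le
  have hchernoff := pow_mul_card_hitCount_lt_le G (c := 1 / 10) (by norm_num) (by norm_num) n m
  rw [hbase, mul_pow] at hchernoff
  calc (#{S : Fin n → β | hitCount G S < m} : ℝ)
      = 10 ^ m * ((1 / 10) ^ m * #{S : Fin n → β | hitCount G S < m}) := by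
        rw [← mul_assoc, ← mul_pow]; norm_num
    _ ≤ 10 ^ m * (card β ^ n * Real.exp (-9 * m)) :=
        mul_le_mul_of_nonneg_left (hchernoff.trans (by gcongr)) (by positivity)
    _ = card β ^ n * (10 ^ m * Real.exp (-9 * m)) := by ring
    _ ≤ card β ^ n * (1 / 20) := by gcongr
    _ = card β ^ n / 20 := by ring

theorem le_card_le_hitCount_div {n m : ℕ} (hm : 0 < m)
    (hdens : 10 * m ≤ n * (#G / card β : ℝ)) :
    19 / 20 ≤ (#{S : Fin n → β | m ≤ hitCount G S} : ℝ) / card (Fin n → β) := by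
  have hM : (0 : ℝ) < card β ^ n := by
    have := card_pos_of_le_mul_card_div G hm hdens
    positivity
  have hsplit := card_filter_add_card_filter_not (s := univ)
    (fun S : Fin n → β => m ≤ hitCount G S)
  simp only [not_le, card_univ, card_fun, Fintype.card_fin] at hsplit
  rw [card_fun, Fintype.card_fin, Nat.cast_pow, le_div_iff₀ hM]
  have hsplit' : (#{S : Fin n → β | m ≤ hitCount G S} : ℝ)
      + #{S : Fin n → β | hitCount G S < m} = card β ^ n := by exact_mod_cast hsplit
  linarith [card_hitCount_lt_le G hm hdens]

end HitCount

theorem exists_card_eq_forall_rel_of_le_hitCount {ι κ α β : Type*} [Fintype ι] [Fintype κ]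
    [DecidableEq κ] [DecidableEq α] [DecidableEq β] {E : α → β → Prop} {P : Finset α}
    {Q : Finset β} (hE : ∀ a ∈ P, ∀ b ∈ Q, E a b) {S : ι → κ → α} {T : ι → κ → β} {m : ℕ}
    (hS : m ≤ hitCount (piFinset fun _ => P) S) (hT : m ≤ hitCount (piFinset fun _ => Q) T) :
    ∃ I J : Finset ι, #I = m ∧ #J = m ∧ ∀ i ∈ I, ∀ j ∈ J, ∀ k k', E (S i k) (T j k') := by
  obtain ⟨I, hI, hIm⟩ := exists_subset_card_eq hS
  obtain ⟨J, hJ, hJm⟩ := exists_subset_card_eq hT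
  refine ⟨I, J, hIm, hJm, fun i hi j hj k k' => hE _ ?_ _ ?_⟩
  · exact mem_piFinset.1 (mem_filter.1 (hI hi)).2 k
  · exact mem_piFinset.1 (mem_filter.1 (hJ hj)).2 k'


theorem card_piFinset_const_div_card_fun {κ α : Type*} [Fintype κ] [DecidableEq κ] [Fintype α]
    (P : Finset α) :
    (#(piFinset fun _ : κ => P) / card (κ → α) : ℝ) = (#P / card α) ^ card κ := by
  simp [div_pow]

theorem two_sided_product_completeness_general {A B : Type*} [Fintype A] [Fintype B]
    (N : ℕ) (hA : Fintype.card A = N) (hB : Fintype.card B = N)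
    (E : A → B → Prop) [∀ a b, Decidable (E a b)]
    (q₁ : ℕ)
    (P : Finset A) (Q : Finset B) (hP : P.card = q₁) (hQ : Q.card = q₁)
    (hE : ∀ a ∈ P, ∀ b ∈ Q, E a b)
    (n ℓ t₁ : ℕ)
    (hcount : 10 * 2 ^ t₁ ≤ (n : ℝ) * ((q₁ : ℝ) / (N : ℝ)) ^ ℓ) :
    (9 : ℝ) / 10 ≤
      (Nat.card {ST : (Fin n → (Fin ℓ → A)) × (Fin n → (Fin ℓ → B)) //
          ∃ I J : Finset (Fin n), I.card = 2 ^ t₁ ∧ J.card = 2 ^ t₁ ∧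
            ∀ i ∈ I, ∀ j ∈ J, ∀ k k' : Fin ℓ, E (ST.1 i k) (ST.2 j k')} : ℝ) /
        (Nat.card ((Fin n → (Fin ℓ → A)) × (Fin n → (Fin ℓ → B))) : ℝ) := by
  classical
  have hdensA : 10 * ((2 ^ t₁ : ℕ) : ℝ)
      ≤ n * (#(piFinset fun _ : Fin ℓ => P) / card (Fin ℓ → A) : ℝ) := by
    rw [card_piFinset_const_div_card_fun, hP, hA, Fintype.card_fin]; exact_mod_cast hcount
  have hdensB : 10 * ((2 ^ t₁ : ℕ) : ℝ)
      ≤ n * (#(piFinset fun _ : Fin ℓ => Q) / card (Fin ℓ → B) : ℝ) := by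
    rw [card_piFinset_const_div_card_fun, hQ, hB, Fintype.card_fin]; exact_mod_cast hcount
  set goodS : Finset (Fin n → Fin ℓ → A) := {S | 2 ^ t₁ ≤ hitCount (piFinset fun _ => P) S}
  set goodT : Finset (Fin n → Fin ℓ → B) := {T | 2 ^ t₁ ≤ hitCount (piFinset fun _ => Q) T}
  have hsub : goodS ×ˢ goodT ⊆ ({ST | ∃ I J : Finset (Fin n), #I = 2 ^ t₁ ∧ #J = 2 ^ t₁ ∧
      ∀ i ∈ I, ∀ j ∈ J, ∀ k k' : Fin ℓ, E (ST.1 i k) (ST.2 j k')} : Finset _) := fun ST hST => by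
    obtain ⟨hS, hT⟩ := mem_product.1 hST
    exact mem_filter.2 ⟨mem_univ _, exists_card_eq_forall_rel_of_le_hitCount hE
      (mem_filter.1 hS).2 (mem_filter.1 hT).2⟩
  rw [Nat.card_eq_fintype_card, Nat.card_eq_fintype_card, Fintype.card_subtype, card_prod]
  calc (9 : ℝ) / 10 ≤ 19 / 20 * (19 / 20) := by norm_num
    _ ≤ #goodS / card (Fin n → Fin ℓ → A) * (#goodT / card (Fin n → Fin ℓ → B)) :=
        mul_le_mul (le_card_le_hitCount_div _ (Nat.two_pow_pos t₁) hdensA)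
          (le_card_le_hitCount_div _ (Nat.two_pow_pos t₁) hdensB) (by norm_num) (by positivity)
    _ = #(goodS ×ˢ goodT) / (card (Fin n → Fin ℓ → A) * card (Fin n → Fin ℓ → B) : ℕ) := by
        rw [card_product, div_mul_div_comm]; push_cast; congr!
    _ ≤ _ := by gcongr

theorem two_sided_product_completeness {A B : Type*} [Fintype A] [Fintype B]
    (N : ℕ) (hN : 1 ≤ N) (hA : Fintype.card A = N) (hB : Fintype.card B = N)
    (E : A → B → Prop) [∀ a b, Decidable (E a b)]
    (q₁ : ℕ) (hq₁ : 1 ≤ q₁)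
    (P : Finset A) (Q : Finset B) (hP : P.card = q₁) (hQ : Q.card = q₁)
    (hE : ∀ a ∈ P, ∀ b ∈ Q, E a b)
    (n ℓ t₁ : ℕ)
    (hcount : 10 * 2 ^ t₁ ≤ (n : ℝ) * ((q₁ : ℝ) / (N : ℝ)) ^ ℓ) :
    (9 : ℝ) / 10 ≤
      (Nat.card {ST : (Fin n → (Fin ℓ → A)) × (Fin n → (Fin ℓ → B)) //
          ∃ I J : Finset (Fin n), I.card = 2 ^ t₁ ∧ J.card = 2 ^ t₁ ∧
            ∀ i ∈ I, ∀ j ∈ J, ∀ k k' : Fin ℓ, E (ST.1 i k) (ST.2 j k')} : ℝ) /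
        (Nat.card ((Fin n → (Fin ℓ → A)) × (Fin n → (Fin ℓ → B))) : ℝ) :=
  two_sided_product_completeness_general N hA hB E q₁ P Q hP hQ hE n ℓ t₁ hcount
end

section
/- Let N, k ≥ 1 be natural numbers. Sample f : Sym2 (Fin N) → Bool uniformly at random (an independent fair bit for each unordered pair of vertices), and say distinct vertices i, j are adjacent iff f s(i,j) = true. Then the probability that there exist disjoint S, T : Finset (Fin N) with |S| = |T| = k such that every i ∈ S is adjacent to every j ∈ T is at most N^{2k} · 2^{−k²} (as real numbers). -/
set_option maxHeartbeats 1000000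

open Finset

lemma card_restrict_true {α : Type*} [Fintype α] [DecidableEq α] (E : Finset α) :
    (Finset.univ.filter (fun f : α → Bool => ∀ x ∈ E, f x = true)).card
      = 2 ^ (Fintype.card α - E.card) := by
  have h : (Finset.univ.filter (fun f : α → Bool => ∀ x ∈ E, f x = true)).card
      = (Finset.univ : Finset ({x : α // x ∉ E} → Bool)).card := by
    apply Finset.card_bij' (fun f _ => fun x => f x.1)
      (fun g _ => fun x => if h : x ∈ E then true else g ⟨x, h⟩)
    · intro f hf
      simp only [Finset.mem_filter, Finset.mem_univ, true_and] at hf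
      funext x
      by_cases h : x ∈ E
      · simp [h, hf x h]
      · simp [h]
    · intro g _
      funext x
      simp [x.2]
    · intro f _; exact Finset.mem_univ _
    · intro g _
      simp only [Finset.mem_filter, Finset.mem_univ, true_and]
      intro x hx
      rw [dif_pos hx]
  rw [h, Finset.card_univ, Fintype.card_fun, Fintype.card_bool,
    Fintype.card_subtype_compl, Fintype.card_coe]

theorem random_graph_biclique_free (N k : ℕ) (hN : 1 ≤ N) (hk : 1 ≤ k) :
    (Nat.card {f : Sym2 (Fin N) → Bool //
        ∃ S T : Finset (Fin N), Disjoint S T ∧ S.card = k ∧ T.card = k ∧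
          ∀ i ∈ S, ∀ j ∈ T, f s(i, j) = true} : ℝ) /
      (Nat.card (Sym2 (Fin N) → Bool) : ℝ) ≤
    (N : ℝ) ^ (2 * k) / 2 ^ (k ^ 2) := by
  classical
  set m := Fintype.card (Sym2 (Fin N)) with hm
  set P : Finset (Finset (Fin N) × Finset (Fin N)) :=
    Finset.univ.filter (fun p => Disjoint p.1 p.2 ∧ p.1.card = k ∧ p.2.card = k) with hP
  set A : Finset (Sym2 (Fin N) → Bool) :=
    Finset.univ.filter (fun f => ∃ S T : Finset (Fin N), Disjoint S T ∧ S.card = k ∧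
      T.card = k ∧ ∀ i ∈ S, ∀ j ∈ T, f s(i, j) = true) with hA
  -- identify numerator and denominator
  have hnum : Nat.card {f : Sym2 (Fin N) → Bool //
      ∃ S T : Finset (Fin N), Disjoint S T ∧ S.card = k ∧ T.card = k ∧
        ∀ i ∈ S, ∀ j ∈ T, f s(i, j) = true} = A.card := by
    rw [Nat.card_eq_fintype_card, Fintype.card_subtype]
  have hden : Nat.card (Sym2 (Fin N) → Bool) = 2 ^ m := by
    rw [Nat.card_eq_fintype_card, Fintype.card_fun, Fintype.card_bool]
  -- E p : forced edges
  set E : Finset (Fin N) × Finset (Fin N) → Finset (Sym2 (Fin N)) :=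
    fun p => (p.1 ×ˢ p.2).image (fun q => s(q.1, q.2)) with hE
  have hEcard : ∀ p ∈ P, (E p).card = k ^ 2 := by
    intro p hp
    simp only [hP, Finset.mem_filter] at hp
    obtain ⟨-, hd, h1, h2⟩ := hp
    rw [hE]
    rw [Finset.card_image_of_injOn, Finset.card_product, h1, h2, sq]
    intro q hq q' hq' hqq
    simp only [Finset.mem_coe, Finset.mem_product] at hq hq'
    rcases Sym2.eq_iff.mp hqq with ⟨ha, hb⟩ | ⟨ha, hb⟩
    · exact Prod.ext ha hb
    · exact absurd (hd.forall_ne_finset hq.1 hq'.2) (by simp [ha])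
  -- union bound subset
  set B : Finset (Fin N) × Finset (Fin N) → Finset (Sym2 (Fin N) → Bool) :=
    fun p => Finset.univ.filter (fun f => ∀ x ∈ E p, f x = true) with hB
  have hBcard : ∀ p ∈ P, (B p).card = 2 ^ (m - k ^ 2) := by
    intro p hp
    rw [hB]
    rw [card_restrict_true, hEcard p hp]
  have hsub : A ⊆ P.biUnion B := by
    rw [hB]
    intro f hf
    simp only [hA, Finset.mem_filter, Finset.mem_univ, true_and] at hf
    obtain ⟨S, T, hd, h1, h2, hall⟩ := hf
    refine Finset.mem_biUnion.mpr ⟨(S, T), ?_, ?_⟩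
    · simp [hP, hd, h1, h2]
    · simp only [Finset.mem_filter, Finset.mem_univ, true_and, hE]
      intro x hx
      simp only [Finset.mem_image, Finset.mem_product] at hx
      obtain ⟨q, ⟨hq1, hq2⟩, rfl⟩ := hx
      exact hall q.1 hq1 q.2 hq2
  -- A empty case
  rcases eq_or_ne A.card 0 with h0 | h0
  · rw [hnum, h0]
    simp only [Nat.cast_zero, zero_div]
    positivity
  -- nonempty case: some pair exists, so k^2 ≤ m
  have hPne : P.Nonempty := by
    rcases Finset.card_pos.mp (Nat.pos_of_ne_zero h0) with ⟨f, hf⟩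
    rcases Finset.mem_biUnion.mp (hsub hf) with ⟨p, hp, -⟩
    exact ⟨p, hp⟩
  have hk2m : k ^ 2 ≤ m := by
    obtain ⟨p, hp⟩ := hPne
    rw [← hEcard p hp]
    exact le_trans (Finset.card_le_univ _) (le_of_eq rfl)
  -- count bound
  have hcount : A.card ≤ P.card * 2 ^ (m - k ^ 2) := by
    calc A.card ≤ (P.biUnion B).card := Finset.card_le_card hsub
      _ ≤ ∑ p ∈ P, (B p).card := Finset.card_biUnion_le
      _ ≤ ∑ p ∈ P, 2 ^ (m - k ^ 2) :=
        Finset.sum_le_sum fun p hp => le_of_eq (hBcard p hp)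
      _ = P.card * 2 ^ (m - k ^ 2) := by rw [Finset.sum_const, smul_eq_mul]
  -- pairs bound
  have hPcard : P.card ≤ N ^ (2 * k) := by
    have : P ⊆ (Finset.univ.powersetCard k) ×ˢ (Finset.univ.powersetCard k) := by
      intro p hp
      simp only [hP, Finset.mem_filter] at hp
      simp [Finset.mem_product, Finset.mem_powersetCard, hp.2.2.1, hp.2.2.2]
    calc P.card ≤ ((Finset.univ.powersetCard k) ×ˢ (Finset.univ.powersetCard k) :
          Finset (Finset (Fin N) × Finset (Fin N))).card := Finset.card_le_card this
      _ = N.choose k * N.choose k := by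
        rw [Finset.card_product, Finset.card_powersetCard, Finset.card_univ, Fintype.card_fin]
      _ ≤ N ^ k * N ^ k :=
        Nat.mul_le_mul (Nat.choose_le_pow N k) (Nat.choose_le_pow N k)
      _ = N ^ (2 * k) := by rw [two_mul, pow_add]
  -- assemble in ℝ
  rw [hnum, hden]
  push_cast
  have h2m : (0:ℝ) < 2 ^ m := by positivity
  rw [div_le_div_iff₀ h2m (by positivity)]
  have key : (A.card : ℝ) ≤ (N : ℝ) ^ (2 * k) * 2 ^ (m - k ^ 2) := by
    calc (A.card : ℝ) ≤ (P.card : ℝ) * 2 ^ (m - k ^ 2) := by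
          exact_mod_cast hcount
      _ ≤ (N : ℝ) ^ (2 * k) * 2 ^ (m - k ^ 2) := by
          have : (P.card : ℝ) ≤ (N : ℝ) ^ (2 * k) := by exact_mod_cast hPcard
          exact mul_le_mul_of_nonneg_right this (by positivity)
  calc (A.card : ℝ) * 2 ^ (k ^ 2) ≤ ((N : ℝ) ^ (2 * k) * 2 ^ (m - k ^ 2)) * 2 ^ (k ^ 2) :=
      mul_le_mul_of_nonneg_right key (by positivity)
    _ = (N : ℝ) ^ (2 * k) * 2 ^ m := by
      rw [mul_assoc, ← pow_add, Nat.sub_add_cancel hk2m]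
end

section
/- Let V be a type, G a simple graph on V, and k a natural number. Suppose there exist S', T' : Finset V with |S'| = |T'| = 2k such that for all a ∈ S' and b ∈ T' with a ≠ b, a and b are adjacent in G. Then there exist disjoint S, T : Finset V with |S| = |T| = k such that every a ∈ S is adjacent in G to every b ∈ T. -/
open Finset

theorem Finset.exists_disjoint_subsets_card_eq {α : Type*} [DecidableEq α] {s t : Finset α}
    {k l : ℕ} (hs : k ≤ #s) (ht : k + l ≤ #t) :
    ∃ S ⊆ s, ∃ T ⊆ t, Disjoint S T ∧ #S = k ∧ #T = l := by
  obtain ⟨S, hSs, hSk⟩ := exists_subset_card_eq hs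
  have hroom : l ≤ #(t \ S) := by
    have := le_card_sdiff S t
    omega
  obtain ⟨T, hTt, hTl⟩ := exists_subset_card_eq hroom
  exact ⟨S, hSs, T, hTt.trans sdiff_subset,
    disjoint_of_subset_right hTt disjoint_sdiff, hSk, hTl⟩

theorem biclique_from_augmented_double_cover {V : Type*} (G : SimpleGraph V) (k : ℕ)
    (S' T' : Finset V) (hS' : S'.card = 2 * k) (hT' : T'.card = 2 * k)
    (hadj : ∀ a ∈ S', ∀ b ∈ T', a ≠ b → G.Adj a b) :
    ∃ S T : Finset V, Disjoint S T ∧ S.card = k ∧ T.card = k ∧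
      ∀ a ∈ S, ∀ b ∈ T, G.Adj a b := by
  classical
  obtain ⟨S, hSS', T, hTT', hdisj, hS, hT⟩ :=
    exists_disjoint_subsets_card_eq (s := S') (t := T') (k := k) (l := k) (by omega) (by omega)
  refine ⟨S, T, hdisj, hS, hT, fun a ha b hb => ?_⟩
  exact hadj a (hSS' ha) b (hTT' hb) (ne_of_mem_of_not_mem ha (disjoint_right.mp hdisj hb))
end
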